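/- arXiv:2205.14056 — 2 statements merged into one kernel-verified Lean document; each statement's English description precedes it below -/
import Mathlib

section
/- Subdifferential of the nuclear norm (Watson), membership direction: let d, p be positive integers, r ≤ min(d,p), and let U₁ ∈ ℝ^{d×r}, U₂ ∈ ℝ^{d×(d−r)}, V₁ ∈ ℝ^{p×r}, V₂ ∈ ℝ^{p×(p−r)} satisfy U₁ᵀU₁ = I_r, U₂ᵀU₂ = I_{d−r}, U₁ᵀU₂ = 0, U₁U₁ᵀ + U₂U₂ᵀ = I_d, V₁ᵀV₁ = I_r, V₂ᵀV₂ = I_{p−r}, V₁ᵀV₂ = 0, V₁V₁ᵀ + V₂V₂ᵀ = I_p. Let D₁ ∈ ℝ^{r×r} be diagonal with nonnegative diagonal entries and set A = U₁D₁V₁ᵀ. Then for every E ∈ ℝ^{(d−r)×(p−r)} with spectral norm ‖E‖₂ ≤ 1, the matrix G = U₁V₁ᵀ + U₂EV₂ᵀ is a subgradient of the nuclear norm at A: for every B ∈ ℝ^{d×p}, ‖B‖_* ≥ ‖A‖_* + Tr(Gᵀ(B − A)). -/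
open Matrix

/-- The spectral norm (ℓ²→ℓ² operator norm, largest singular value) of a real matrix. -/
noncomputable def matrixSpectralNorm {m n : Type*} [Fintype m] [Fintype n] [DecidableEq n]
    (M : Matrix m n ℝ) : ℝ :=
  ‖LinearMap.toContinuousLinearMap (Matrix.toEuclideanLin M)‖

theorem isHermitian_transpose_mul_self_real {m n : Type*} [Fintype m] [Fintype n]
    (M : Matrix m n ℝ) : (Mᵀ * M).IsHermitian := by
  rw [← Matrix.conjTranspose_eq_transpose_of_trivial]
  exact Matrix.isHermitian_conjTranspose_mul_self M

/-- The nuclear norm of a real matrix: the sum of the square roots of the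
eigenvalues of `Mᵀ * M`, i.e. the sum of the singular values of `M`. -/
noncomputable def nuclearNorm {m n : Type*} [Fintype m] [Fintype n] [DecidableEq n]
    (M : Matrix m n ℝ) : ℝ :=
  ∑ i, Real.sqrt ((isHermitian_transpose_mul_self_real M).eigenvalues i)

/-- The largest (real) eigenvalue of a real square matrix, as the supremum of its
real spectrum.  For a symmetric matrix this is its largest eigenvalue. -/
noncomputable def lamMax {n : Type*} [Fintype n] [DecidableEq n] (S : Matrix n n ℝ) : ℝ :=
  sSup (spectrum ℝ S)

/-! Spectral and nuclear norms are dual for the trace pairing: expanding `Tr(GᵀB)` in an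
orthonormal eigenbasis `wᵢ` of `BᵀB` gives `∑ ⟨G wᵢ, B wᵢ⟩ ≤ ‖G‖₂ ∑ ‖B wᵢ‖ = ‖G‖₂ ‖B‖_*`.
For `G = U₁V₁ᵀ + U₂EV₂ᵀ` the orthogonality relations give
`‖Gx‖² = ‖V₁ᵀx‖² + ‖EV₂ᵀx‖² ≤ ‖V₁ᵀx‖² + ‖V₂ᵀx‖² = ‖x‖²`, so `‖G‖₂ ≤ 1`, and
`Tr(GᵀA) = Tr D₁ = ‖A‖_*`, the last equality because `V₁D₁V₁ᵀ` is the positive square root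
of `AᵀA`. Hence `‖B‖_* ≥ Tr(GᵀB) = ‖A‖_* + Tr(Gᵀ(B - A))`. -/

open WithLp
open scoped InnerProductSpace MatrixOrder

section Basic

variable {l m n : Type*} [Fintype l] [Fintype m] [Fintype n]

theorem norm_toLp_two_sq (v : n → ℝ) : ‖toLp 2 v‖ ^ 2 = v ⬝ᵥ v := by
  rw [EuclideanSpace.real_norm_sq_eq]
  simp [dotProduct, sq]

theorem mulVec_dotProduct_mulVec {R : Type*} [CommSemiring R]
    (A : Matrix l m R) (B : Matrix l n R) (x : m → R) (y : n → R) :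
    (A *ᵥ x) ⬝ᵥ (B *ᵥ y) = x ⬝ᵥ (Aᵀ * B) *ᵥ y := by
  rw [← mulVec_mulVec, dotProduct_mulVec x, vecMul_transpose]

theorem posSemidef_transpose_mul_self_real (M : Matrix m n ℝ) : (Mᵀ * M).PosSemidef := by
  simpa using posSemidef_conjTranspose_mul_self M

theorem trace_eq_sum_dotProduct_mulVec [DecidableEq n] (M : Matrix n n ℝ)
    (b : OrthonormalBasis n ℝ (EuclideanSpace ℝ n)) :
    M.trace = ∑ i, ⇑(b i) ⬝ᵥ M *ᵥ ⇑(b i) := by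
  let e := PiLp.basisFun 2 ℝ n
  calc M.trace = (LinearMap.toMatrix e e (toLin e e M)).trace := by
        rw [LinearMap.toMatrix_toLin]
    _ = ∑ i, ⟪b i, toEuclideanLin M (b i)⟫_ℝ :=
      (LinearMap.trace_eq_matrix_trace ℝ e _).symm.trans (LinearMap.trace_eq_sum_inner _ b)
    _ = ∑ i, ⇑(b i) ⬝ᵥ M *ᵥ ⇑(b i) := by
      simp [EuclideanSpace.inner_eq_star_dotProduct, dotProduct_comm]

end Basic

section SpectralNorm

variable {m n : Type*} [Fintype m] [Fintype n] [DecidableEq n]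

theorem norm_mulVec_le_matrixSpectralNorm (M : Matrix m n ℝ) (x : n → ℝ) :
    ‖toLp 2 (M *ᵥ x)‖ ≤ matrixSpectralNorm M * ‖toLp 2 x‖ :=
  (LinearMap.toContinuousLinearMap (toEuclideanLin M)).le_opNorm (toLp 2 x)

theorem dotProduct_mulVec_self_le (M : Matrix m n ℝ) (x : n → ℝ) :
    (M *ᵥ x) ⬝ᵥ (M *ᵥ x) ≤ matrixSpectralNorm M ^ 2 * (x ⬝ᵥ x) := by
  rw [← norm_toLp_two_sq, ← norm_toLp_two_sq, ← mul_pow]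
  exact pow_le_pow_left₀ (norm_nonneg _) (norm_mulVec_le_matrixSpectralNorm M x) 2

theorem matrixSpectralNorm_le_of_dotProduct_mulVec_self_le {M : Matrix m n ℝ} {c : ℝ}
    (hc : 0 ≤ c) (h : ∀ x, (M *ᵥ x) ⬝ᵥ (M *ᵥ x) ≤ c ^ 2 * (x ⬝ᵥ x)) :
    matrixSpectralNorm M ≤ c := by
  refine ContinuousLinearMap.opNorm_le_bound _ hc fun x => ?_
  have hx := h (ofLp x)
  rw [← norm_toLp_two_sq, ← norm_toLp_two_sq, toLp_ofLp, ← mul_pow] at hx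
  exact (pow_le_pow_iff_left₀ (norm_nonneg _) (by positivity) two_ne_zero).mp hx

end SpectralNorm

section NuclearNorm

variable {m n : Type*} [Fintype m] [Fintype n] [DecidableEq n]

theorem nuclearNorm_nonneg (M : Matrix m n ℝ) : 0 ≤ nuclearNorm M :=
  Finset.sum_nonneg fun _ _ => Real.sqrt_nonneg _

theorem norm_mulVec_eigenvectorBasis (B : Matrix m n ℝ) (i : n) :
    ‖toLp 2 (B *ᵥ ⇑((isHermitian_transpose_mul_self_real B).eigenvectorBasis i))‖ =
      √((isHermitian_transpose_mul_self_real B).eigenvalues i) := by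
  set hS := isHermitian_transpose_mul_self_real B
  set w := hS.eigenvectorBasis i
  have hw : ⇑w ⬝ᵥ ⇑w = 1 := by
    rw [← norm_toLp_two_sq]
    simp [w, hS.eigenvectorBasis.orthonormal.1 i]
  rw [← Real.sqrt_sq (norm_nonneg _), norm_toLp_two_sq, mulVec_dotProduct_mulVec,
    hS.mulVec_eigenvectorBasis, dotProduct_smul, hw, smul_eq_mul, mul_one]

theorem trace_transpose_mul_le_matrixSpectralNorm_mul_nuclearNorm (G B : Matrix m n ℝ) :
    (Gᵀ * B).trace ≤ matrixSpectralNorm G * nuclearNorm B := by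
  set hS := isHermitian_transpose_mul_self_real B
  rw [trace_eq_sum_dotProduct_mulVec _ hS.eigenvectorBasis, nuclearNorm, Finset.mul_sum]
  refine Finset.sum_le_sum fun i _ => ?_
  set w := ⇑(hS.eigenvectorBasis i)
  calc w ⬝ᵥ (Gᵀ * B) *ᵥ w = ⟪toLp 2 (G *ᵥ w), toLp 2 (B *ᵥ w)⟫_ℝ := by
        rw [EuclideanSpace.inner_toLp_toLp, star_trivial, dotProduct_comm (B *ᵥ w),
          mulVec_dotProduct_mulVec]
    _ ≤ ‖toLp 2 (G *ᵥ w)‖ * ‖toLp 2 (B *ᵥ w)‖ := real_inner_le_norm _ _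
    _ ≤ matrixSpectralNorm G * √(hS.eigenvalues i) := by
      rw [norm_mulVec_eigenvectorBasis]
      refine mul_le_mul_of_nonneg_right ?_ (Real.sqrt_nonneg _)
      simpa [w, hS.eigenvectorBasis.orthonormal.1 i] using
        norm_mulVec_le_matrixSpectralNorm G w

theorem nuclearNorm_eq_trace_sqrt (M : Matrix m n ℝ) :
    nuclearNorm M = (CFC.sqrt (Mᵀ * M)).trace := by
  have hM := posSemidef_transpose_mul_self_real M
  rw [nuclearNorm, CFC.sqrt_eq_cfc, cfc_nnreal_eq_real _ (Mᵀ * M) hM.nonneg, hM.1.cfc_eq,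
    IsHermitian.cfc, Unitary.conjStarAlgAut_apply, trace_mul_cycle, Unitary.coe_star_mul_self,
    one_mul, trace_diagonal]
  refine Finset.sum_congr rfl fun i _ => ?_
  simp [hM.eigenvalues_nonneg i]

theorem nuclearNorm_eq_trace_of_mul_self_eq {M : Matrix m n ℝ} {N : Matrix n n ℝ}
    (hN : N.PosSemidef) (h : N * N = Mᵀ * M) : nuclearNorm M = N.trace := by
  rw [nuclearNorm_eq_trace_sqrt,
    (CFC.sqrt_eq_iff _ _ (posSemidef_transpose_mul_self_real M).nonneg hN.nonneg).mpr h]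

theorem nuclearNorm_mul_diagonal_mul_transpose {k : Type*} [Fintype k] [DecidableEq k]
    {U : Matrix m k ℝ} {V : Matrix n k ℝ} (hU : Uᵀ * U = 1) (hV : Vᵀ * V = 1)
    {D : k → ℝ} (hD : ∀ i, 0 ≤ D i) :
    nuclearNorm (U * diagonal D * Vᵀ) = ∑ i, D i := by
  have hN : (V * diagonal D * Vᵀ).PosSemidef := by
    simpa using (posSemidef_diagonal_iff.mpr hD).mul_mul_conjTranspose_same V
  have hsq : V * diagonal D * Vᵀ * (V * diagonal D * Vᵀ) =
      (U * diagonal D * Vᵀ)ᵀ * (U * diagonal D * Vᵀ) := by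
    simp only [transpose_mul, transpose_transpose, diagonal_transpose, Matrix.mul_assoc]
    rw [← Matrix.mul_assoc Vᵀ V, ← Matrix.mul_assoc Uᵀ U, hU, hV]
  rw [nuclearNorm_eq_trace_of_mul_self_eq hN hsq, trace_mul_cycle, hV, one_mul, trace_diagonal]

end NuclearNorm

section Subgradient

variable {m n k l l' : Type*} [Fintype m] [Fintype n] [Fintype k] [Fintype l] [Fintype l']
  {U₁ : Matrix m k ℝ} {U₂ : Matrix m l ℝ} {V₁ : Matrix n k ℝ} {V₂ : Matrix n l' ℝ}

theorem dotProduct_self_mulVec_add_mulVec [DecidableEq k] [DecidableEq l]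
    (hU₁ : U₁ᵀ * U₁ = 1) (hU₂ : U₂ᵀ * U₂ = 1) (hU₁₂ : U₁ᵀ * U₂ = 0) (a : k → ℝ) (b : l → ℝ) :
    (U₁ *ᵥ a + U₂ *ᵥ b) ⬝ᵥ (U₁ *ᵥ a + U₂ *ᵥ b) = a ⬝ᵥ a + b ⬝ᵥ b := by
  have hU₂₁ : U₂ᵀ * U₁ = 0 := by simpa using congrArg transpose hU₁₂
  simp [add_dotProduct, dotProduct_add, mulVec_dotProduct_mulVec, hU₁, hU₂, hU₁₂, hU₂₁]

theorem dotProduct_self_transpose_mulVec_add [DecidableEq n]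
    (hV : V₁ * V₁ᵀ + V₂ * V₂ᵀ = 1) (x : n → ℝ) :
    (V₁ᵀ *ᵥ x) ⬝ᵥ (V₁ᵀ *ᵥ x) + (V₂ᵀ *ᵥ x) ⬝ᵥ (V₂ᵀ *ᵥ x) = x ⬝ᵥ x := by
  rw [mulVec_dotProduct_mulVec, mulVec_dotProduct_mulVec, ← dotProduct_add, ← add_mulVec]
  simp [hV]

theorem matrixSpectralNorm_subgradient_le_one [DecidableEq n] [DecidableEq k] [DecidableEq l]
    [DecidableEq l'] (hU₁ : U₁ᵀ * U₁ = 1) (hU₂ : U₂ᵀ * U₂ = 1) (hU₁₂ : U₁ᵀ * U₂ = 0)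
    (hV : V₁ * V₁ᵀ + V₂ * V₂ᵀ = 1) {E : Matrix l l' ℝ} (hE : matrixSpectralNorm E ≤ 1) :
    matrixSpectralNorm (U₁ * V₁ᵀ + U₂ * E * V₂ᵀ) ≤ 1 := by
  refine matrixSpectralNorm_le_of_dotProduct_mulVec_self_le zero_le_one fun x => ?_
  have hGx : (U₁ * V₁ᵀ + U₂ * E * V₂ᵀ) *ᵥ x = U₁ *ᵥ (V₁ᵀ *ᵥ x) + U₂ *ᵥ (E *ᵥ (V₂ᵀ *ᵥ x)) := by
    simp only [add_mulVec, mulVec_mulVec, Matrix.mul_assoc]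
  have hEx : (E *ᵥ (V₂ᵀ *ᵥ x)) ⬝ᵥ (E *ᵥ (V₂ᵀ *ᵥ x)) ≤ (V₂ᵀ *ᵥ x) ⬝ᵥ (V₂ᵀ *ᵥ x) :=
    (dotProduct_mulVec_self_le E _).trans <| mul_le_of_le_one_left
      (by rw [← norm_toLp_two_sq]; positivity) (pow_le_one₀ (norm_nonneg _) hE)
  rw [hGx, dotProduct_self_mulVec_add_mulVec hU₁ hU₂ hU₁₂, one_pow, one_mul,
    ← dotProduct_self_transpose_mulVec_add hV x]
  linarith

theorem trace_subgradient_transpose_mul [DecidableEq k] (hU₁ : U₁ᵀ * U₁ = 1)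
    (hU₁₂ : U₁ᵀ * U₂ = 0) (hV₁ : V₁ᵀ * V₁ = 1) (E : Matrix l l' ℝ) (D : k → ℝ) :
    ((U₁ * V₁ᵀ + U₂ * E * V₂ᵀ)ᵀ * (U₁ * diagonal D * V₁ᵀ)).trace = ∑ i, D i := by
  have hU₂₁ : U₂ᵀ * U₁ = 0 := by simpa using congrArg transpose hU₁₂
  have hGU : (U₁ * V₁ᵀ + U₂ * E * V₂ᵀ)ᵀ * U₁ = V₁ := by
    simp [Matrix.add_mul, Matrix.mul_assoc, hU₁, hU₂₁]
  rw [← Matrix.mul_assoc, ← Matrix.mul_assoc, hGU, trace_mul_cycle, hV₁, one_mul, trace_diagonal]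

end Subgradient

theorem nuclearNorm_subgradient_general (d p r : ℕ)
    (U₁ : Matrix (Fin d) (Fin r) ℝ) (U₂ : Matrix (Fin d) (Fin (d - r)) ℝ)
    (V₁ : Matrix (Fin p) (Fin r) ℝ) (V₂ : Matrix (Fin p) (Fin (p - r)) ℝ)
    (hU₁ : U₁ᵀ * U₁ = 1) (hU₂ : U₂ᵀ * U₂ = 1) (hU₁₂ : U₁ᵀ * U₂ = 0)
    (hV₁ : V₁ᵀ * V₁ = 1)
    (hVfull : V₁ * V₁ᵀ + V₂ * V₂ᵀ = 1)
    (D : Fin r → ℝ) (hD : ∀ i, 0 ≤ D i)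
    (E : Matrix (Fin (d - r)) (Fin (p - r)) ℝ) (hE : matrixSpectralNorm E ≤ 1) :
    ∀ B : Matrix (Fin d) (Fin p) ℝ,
      nuclearNorm B ≥
        nuclearNorm (U₁ * Matrix.diagonal D * V₁ᵀ) +
          ((U₁ * V₁ᵀ + U₂ * E * V₂ᵀ)ᵀ * (B - U₁ * Matrix.diagonal D * V₁ᵀ)).trace := by
  intro B
  have hG := matrixSpectralNorm_subgradient_le_one hU₁ hU₂ hU₁₂ hVfull hE
  have hGB : ((U₁ * V₁ᵀ + U₂ * E * V₂ᵀ)ᵀ * B).trace ≤ nuclearNorm B :=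
    (trace_transpose_mul_le_matrixSpectralNorm_mul_nuclearNorm _ B).trans <|
      mul_le_of_le_one_left (nuclearNorm_nonneg B) hG
  rw [ge_iff_le, Matrix.mul_sub, trace_sub, nuclearNorm_mul_diagonal_mul_transpose hU₁ hV₁ hD,
    trace_subgradient_transpose_mul hU₁ hU₁₂ hV₁]
  linarith

/-- Watson's subdifferential of the nuclear norm, membership direction:
with `A = U₁D₁V₁ᵀ` and `‖E‖₂ ≤ 1`, the matrix `G = U₁V₁ᵀ + U₂EV₂ᵀ` is a subgradient
of the nuclear norm at `A`. -/
theorem nuclearNorm_subgradient (d p r : ℕ) (hd : 0 < d) (hp : 0 < p)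
    (hr : r ≤ min d p)
    (U₁ : Matrix (Fin d) (Fin r) ℝ) (U₂ : Matrix (Fin d) (Fin (d - r)) ℝ)
    (V₁ : Matrix (Fin p) (Fin r) ℝ) (V₂ : Matrix (Fin p) (Fin (p - r)) ℝ)
    (hU₁ : U₁ᵀ * U₁ = 1) (hU₂ : U₂ᵀ * U₂ = 1) (hU₁₂ : U₁ᵀ * U₂ = 0)
    (hUfull : U₁ * U₁ᵀ + U₂ * U₂ᵀ = 1)
    (hV₁ : V₁ᵀ * V₁ = 1) (hV₂ : V₂ᵀ * V₂ = 1) (hV₁₂ : V₁ᵀ * V₂ = 0)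
    (hVfull : V₁ * V₁ᵀ + V₂ * V₂ᵀ = 1)
    (D : Fin r → ℝ) (hD : ∀ i, 0 ≤ D i)
    (E : Matrix (Fin (d - r)) (Fin (p - r)) ℝ) (hE : matrixSpectralNorm E ≤ 1) :
    ∀ B : Matrix (Fin d) (Fin p) ℝ,
      nuclearNorm B ≥
        nuclearNorm (U₁ * Matrix.diagonal D * V₁ᵀ) +
          ((U₁ * V₁ᵀ + U₂ * E * V₂ᵀ)ᵀ * (B - U₁ * Matrix.diagonal D * V₁ᵀ)).trace :=
  nuclearNorm_subgradient_general d p r U₁ U₂ V₁ V₂ hU₁ hU₂ hU₁₂ hV₁ hVfull D hD E hE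
end

section
/- Multiclass convolution output recovery (core of Theorem 6): let V₁ ∈ ℝ^{mp×r} satisfy V₁ᵀV₁ = I_r, let V₂ ∈ ℝ^{mp×s} satisfy V₁ᵀV₂ = 0, let U₁ ∈ ℝ^{d×r}, U₂ ∈ ℝ^{d×t}, E ∈ ℝ^{t×s} be arbitrary, and let Φ₁,…,Φₙ ∈ ℝ^{d×p} and β_{k,j} ∈ ℝ (k ∈ {1,…,m}, j ∈ {1,…,n}) satisfy Σⱼ Σₖ β_{k,j} (Φⱼ)'ₖ = U₁V₁ᵀ + U₂EV₂ᵀ. Then for every i ∈ {1,…,n}: ΦᵢᵀU₁ = Σⱼ Σₖ β_{k,j} Rₖ(ΦᵢᵀΦⱼ) V₁, where Rₖ(ΦᵢᵀΦⱼ) ∈ ℝ^{p×mp} is the row-block embedding of ΦᵢᵀΦⱼ in the k-th block of columns. (With β_{k,j} = α̂'_{k,j} and K(xᵢ,xⱼ) = ΦᵢᵀΦⱼ this is Φ(xᵢ)ᵀÛ₁ = Σⱼ Σₖ α̂'_{k,j} [0_{p×(k−1)p}, K(xᵢ,xⱼ), 0_{p×(m−k)p}] V̂₁.) -/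
open Matrix

/-- Block embedding `Φ'ₖ ∈ ℝ^{d×mp}` of `Φ ∈ ℝ^{d×p}`: columns indexed by pairs
`(a, j)`, with `(Φ'ₖ)_{i,(a,j)} = Φ_{ij}` if `a = k` and `0` otherwise. -/
def blockEmbed {d p m : ℕ} (k : Fin m) (Φ : Matrix (Fin d) (Fin p) ℝ) :
    Matrix (Fin d) (Fin m × Fin p) ℝ :=
  Matrix.of fun i aj => if aj.1 = k then Φ i aj.2 else 0

/-- Block-diagonal embedding `K'ₖ(M) ∈ ℝ^{mp×mp}` of `M ∈ ℝ^{p×p}`: the matrix with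
`M` in the `k`-th `p×p` diagonal block and zeros elsewhere. -/
def blockDiagEmbed {p m : ℕ} (k : Fin m) (M : Matrix (Fin p) (Fin p) ℝ) :
    Matrix (Fin m × Fin p) (Fin m × Fin p) ℝ :=
  Matrix.of fun aj bj' => if aj.1 = k ∧ bj'.1 = k then M aj.2 bj'.2 else 0

/-- Row-block embedding `Rₖ(M) = [0_{p×(k−1)p}, M, 0_{p×(m−k)p}] ∈ ℝ^{p×mp}` of
`M ∈ ℝ^{p×p}`: columns indexed by pairs `(a, j')`, with entry `M_{j j'}` if `a = k`
and `0` otherwise. -/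
def rowBlockEmbed {p m : ℕ} (k : Fin m) (M : Matrix (Fin p) (Fin p) ℝ) :
    Matrix (Fin p) (Fin m × Fin p) ℝ :=
  Matrix.of fun j aj' => if aj'.1 = k then M j aj'.2 else 0

/-! Multiplying the decomposition `Σⱼ Σₖ β_{k,j} (Φⱼ)'ₖ = U₁V₁ᵀ + U₂EV₂ᵀ` by `Φᵢᵀ` on the left
and by `V₁` on the right gives the claim: on the right-hand side `V₁ᵀV₁ = I` and `V₂ᵀV₁ = 0`
leave `ΦᵢᵀU₁`, and on the left-hand side `Φᵢᵀ (Φⱼ)'ₖ = Rₖ(ΦᵢᵀΦⱼ)`. -/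

lemma mul_blockEmbed {d p m : ℕ} (k : Fin m) (A : Matrix (Fin p) (Fin d) ℝ)
    (B : Matrix (Fin d) (Fin p) ℝ) :
    A * blockEmbed k B = rowBlockEmbed k (A * B) := by
  ext j aj'
  simp only [mul_apply, blockEmbed, rowBlockEmbed, Matrix.of_apply]
  split <;> simp

lemma add_mul_transpose_mul_eq_of_orthonormal {R ι κ μ ν : Type*} [CommRing R]
    [Fintype ι] [Fintype κ] [Fintype μ] [DecidableEq κ]
    {V : Matrix ι κ R} {W : Matrix ι μ R} (hV : Vᵀ * V = 1) (hVW : Vᵀ * W = 0)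
    (A : Matrix ν κ R) (B : Matrix ν μ R) :
    (A * Vᵀ + B * Wᵀ) * V = A := by
  have hWV : Wᵀ * V = 0 := by simpa using congrArg transpose hVW
  rw [Matrix.add_mul, Matrix.mul_assoc, hV, Matrix.mul_assoc, hWV, Matrix.mul_one,
    Matrix.mul_zero, add_zero]

/-- multiclass convolution output recovery: if
`Σⱼ Σₖ β_{k,j} (Φⱼ)'ₖ = U₁V₁ᵀ + U₂EV₂ᵀ` with `V₁ᵀV₁ = I` and `V₁ᵀV₂ = 0`, then
`ΦᵢᵀU₁ = Σⱼ Σₖ β_{k,j} Rₖ(ΦᵢᵀΦⱼ) V₁` for every `i`. -/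
theorem multiclass_conv_output_recovery (d p r s t n m : ℕ)
    (V₁ : Matrix (Fin m × Fin p) (Fin r) ℝ) (hV₁ : V₁ᵀ * V₁ = 1)
    (V₂ : Matrix (Fin m × Fin p) (Fin s) ℝ) (hV₁₂ : V₁ᵀ * V₂ = 0)
    (U₁ : Matrix (Fin d) (Fin r) ℝ) (U₂ : Matrix (Fin d) (Fin t) ℝ)
    (E : Matrix (Fin t) (Fin s) ℝ)
    (Φ : Fin n → Matrix (Fin d) (Fin p) ℝ) (β : Fin m → Fin n → ℝ)
    (hsum : ∑ j, ∑ k, β k j • blockEmbed k (Φ j) = U₁ * V₁ᵀ + U₂ * E * V₂ᵀ) :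
    ∀ i : Fin n,
      (Φ i)ᵀ * U₁ = ∑ j, ∑ k, β k j • (rowBlockEmbed k ((Φ i)ᵀ * Φ j) * V₁) := by
  intro i
  calc (Φ i)ᵀ * U₁ = (Φ i)ᵀ * ((U₁ * V₁ᵀ + U₂ * E * V₂ᵀ) * V₁) := by
        rw [add_mul_transpose_mul_eq_of_orthonormal hV₁ hV₁₂]
    _ = (Φ i)ᵀ * (∑ j, ∑ k, β k j • blockEmbed k (Φ j)) * V₁ := by
        rw [← hsum, Matrix.mul_assoc]
    _ = ∑ j, ∑ k, β k j • (rowBlockEmbed k ((Φ i)ᵀ * Φ j) * V₁) := by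
        simp only [Matrix.mul_sum, Matrix.sum_mul, Matrix.mul_smul, Matrix.smul_mul,
          mul_blockEmbed]
end
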